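/- arXiv:2302.05396 — 2 statements merged into one kernel-verified Lean document; each statement's English description precedes it below -/
import Mathlib

section
/- Let δ > 0, γ > 1/δ, 0 ≤ γ' < 1/δ with γ + γ' < 1, and for n > 1 set I(n) = ∫_{1/n}^1 ∫_{1/n}^1 min(1, (min(s,t))^{−γδ} (max(s,t))^{−γ'δ} n^{−δ}) ds dt. Then lim_{n→∞} (−log I(n) / log n) = δ + 1 − γδ. -/
/-!
For `n ≥ 4` the double integral is `≍ n^(-(δ + 1 - γδ))`. From below: on the rectangle
`[1/n, 2/n] × [1/2, 1]` the kernel is at least `2^(-γδ) n^(γδ - δ)` (this is at most `1`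
because `γ < 1`), and the rectangle has area `1/(2n)`. From above: dropping the `1` in the
minimum, the kernel is bounded by `n^(-δ) (s^(-γδ) t^(-γ'δ) + s^(-γ'δ) t^(-γδ))`, whose
integral factorises; since `γδ > 1 > γ'δ`, `∫_{1/n}^1 t^(-γδ) dt ≤ n^(γδ-1)/(γδ-1)` while
`∫_{1/n}^1 t^(-γ'δ) dt ≤ 1/(1-γ'δ)`. Two-sided bounds `c n^(-α) ≤ I(n) ≤ C n^(-α)` force
`-log I(n) / log n → α`.
-/

open Filter MeasureTheory Set Real Topology

/-- The paper's `φ(s, t, n)` at `p = (s, t)`, with `a = γδ` and `b = γ'δ`. -/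
noncomputable def connectionKernel (a b δ n : ℝ) (p : ℝ × ℝ) : ℝ :=
  min 1 (min p.1 p.2 ^ (-a) * max p.1 p.2 ^ (-b) * n ^ (-δ))

theorem tendsto_neg_log_div_log_of_rpow_bounds {f : ℝ → ℝ} {α c C : ℝ} (hc : 0 < c)
    (h : ∀ᶠ n in atTop, c * n ^ (-α) ≤ f n ∧ f n ≤ C * n ^ (-α)) :
    Tendsto (fun n => -log (f n) / log n) atTop (𝓝 α) := by
  have hlim (K : ℝ) : Tendsto (fun n => α - K / log n) atTop (𝓝 α) := by
    simpa using (tendsto_const_nhds (x := K)).div_atTop tendsto_log_atTop |>.const_sub α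
  have hbounds : ∀ᶠ n in atTop,
      α - log C / log n ≤ -log (f n) / log n ∧ -log (f n) / log n ≤ α - log c / log n := by
    filter_upwards [h, eventually_gt_atTop 1] with n ⟨hlo, hhi⟩ hn
    have hn0 : 0 < n := by linarith
    have hL : 0 < log n := log_pos hn
    have hC : 0 < C := hc.trans_le <| le_of_mul_le_mul_right (hlo.trans hhi) (by positivity)
    have hlog_mul {K : ℝ} (hK : 0 < K) : log (K * n ^ (-α)) = log K - α * log n := by
      rw [log_mul hK.ne' (by positivity), log_rpow hn0]; ring
    have hupper := log_le_log ((by positivity : 0 < c * n ^ (-α)).trans_le hlo) hhi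
    have hlower := log_le_log (by positivity) hlo
    rw [hlog_mul hC] at hupper
    rw [hlog_mul hc] at hlower
    constructor
    · rw [le_div_iff₀ hL, sub_mul, div_mul_cancel₀ _ hL.ne']; linarith
    · rw [div_le_iff₀ hL, sub_mul, div_mul_cancel₀ _ hL.ne']; linarith
  exact tendsto_of_tendsto_of_tendsto_of_le_of_le' (hlim _) (hlim _)
    (hbounds.mono fun _ => And.left) (hbounds.mono fun _ => And.right)

theorem integral_Icc_rpow_neg {x c : ℝ} (hx : 0 < x) (hx1 : x ≤ 1) (hc : c ≠ 1) :
    ∫ t in Icc x 1, t ^ (-c) = (1 - x ^ (1 - c)) / (1 - c) := by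
  rw [integral_Icc_eq_integral_Ioc, ← intervalIntegral.integral_of_le hx1,
    integral_rpow (Or.inr ⟨by contrapose! hc; linarith, by
      rw [uIcc_of_le hx1]; exact fun h => h.1.not_gt hx⟩)]
  rw [one_rpow, show -c + 1 = 1 - c by ring]

theorem integral_Icc_rpow_neg_le_of_one_lt {x a : ℝ} (hx : 0 < x) (hx1 : x ≤ 1) (ha : 1 < a) :
    ∫ t in Icc x 1, t ^ (-a) ≤ x ^ (1 - a) / (a - 1) := by
  rw [integral_Icc_rpow_neg hx hx1 ha.ne', ← neg_div_neg_eq, neg_sub, neg_sub]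
  gcongr
  linarith

theorem integral_Icc_rpow_neg_le_of_lt_one {x b : ℝ} (hx : 0 < x) (hx1 : x ≤ 1) (hb : b < 1) :
    ∫ t in Icc x 1, t ^ (-b) ≤ 1 / (1 - b) := by
  rw [integral_Icc_rpow_neg hx hx1 hb.ne]
  have := sub_pos.2 hb
  gcongr
  linarith [rpow_nonneg hx.le (1 - b)]

theorem integrableOn_rpow_Icc {x y : ℝ} (hx : 0 < x) (c : ℝ) :
    IntegrableOn (fun t : ℝ => t ^ c) (Icc x y) :=
  ContinuousOn.integrableOn_Icc fun t ht =>
    (continuousAt_rpow_const t c (Or.inl (hx.trans_le ht.1).ne')).continuousWithinAt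

theorem integrableOn_rpow_mul_rpow_Icc_prod {x y : ℝ} (hx : 0 < x) (c d : ℝ) :
    IntegrableOn (fun p : ℝ × ℝ => p.1 ^ c * p.2 ^ d) (Icc x y ×ˢ Icc x y) := by
  rw [IntegrableOn, Measure.volume_eq_prod, ← Measure.prod_restrict]
  exact (integrableOn_rpow_Icc hx c).mul_prod (integrableOn_rpow_Icc hx d)

section ConnectionKernel

variable {a b δ n : ℝ}

theorem connectionKernel_le_one (p : ℝ × ℝ) : connectionKernel a b δ n p ≤ 1 :=
  min_le_left _ _

theorem connectionKernel_nonneg (hn : 0 ≤ n) {p : ℝ × ℝ} (h₁ : 0 ≤ p.1) (h₂ : 0 ≤ p.2) :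
    0 ≤ connectionKernel a b δ n p :=
  le_min zero_le_one <| by
    have := le_min h₁ h₂; have := h₁.trans (le_max_left p.1 p.2); positivity

theorem measurable_connectionKernel : Measurable (connectionKernel a b δ n) := by
  unfold connectionKernel; fun_prop

theorem integrableOn_connectionKernel (hn : 0 ≤ n) {x y : ℝ} (hx : 0 ≤ x) :
    IntegrableOn (connectionKernel a b δ n) (Icc x y ×ˢ Icc x y) := by
  refine Measure.integrableOn_of_bounded (M := 1)
    (isCompact_Icc.prod isCompact_Icc).measure_lt_top.ne
    measurable_connectionKernel.aestronglyMeasurable ?_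
  refine (ae_restrict_iff' (measurableSet_Icc.prod measurableSet_Icc)).2 (ae_of_all _ ?_)
  rintro p ⟨h₁, h₂⟩
  rw [norm_of_nonneg (connectionKernel_nonneg hn (hx.trans h₁.1) (hx.trans h₂.1))]
  exact connectionKernel_le_one p

theorem setIntegral_connectionKernel_eq_iterated (hn : 0 ≤ n) {x y : ℝ} (hx : 0 ≤ x) :
    ∫ p in Icc x y ×ˢ Icc x y, connectionKernel a b δ n p =
      ∫ s in Icc x y, ∫ t in Icc x y, connectionKernel a b δ n (s, t) :=
  setIntegral_prod _ (integrableOn_connectionKernel hn hx)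

theorem le_connectionKernel (ha : 0 ≤ a) (hb : 0 ≤ b) (haδ : a ≤ δ) (hn : 4 ≤ n) {p : ℝ × ℝ}
    (hp : p ∈ Icc (1 / n) (2 / n) ×ˢ Icc (1 / 2) 1) :
    2 ^ (-a) * n ^ (a - δ) ≤ connectionKernel a b δ n p := by
  obtain ⟨⟨hs₁, hs₂⟩, ht₁, ht₂⟩ := hp
  have hn0 : 0 < n := by linarith
  have hs0 : 0 < p.1 := lt_of_lt_of_le (by positivity) hs₁
  have hst : p.1 ≤ p.2 := hs₂.trans <| ht₁.trans' <| by rw [div_le_div_iff₀ hn0 two_pos]; linarith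
  refine le_min ?_ ?_
  · exact mul_le_one₀ (rpow_le_one_of_one_le_of_nonpos one_le_two (by linarith))
      (by positivity) (rpow_le_one_of_one_le_of_nonpos (by linarith) (by linarith))
  rw [min_eq_left hst, max_eq_right hst]
  calc 2 ^ (-a) * n ^ (a - δ) = (2 / n) ^ (-a) * 1 * n ^ (-δ) := by
        rw [div_rpow two_pos.le hn0.le, rpow_neg hn0.le a, div_inv_eq_mul, mul_one, mul_assoc,
          ← rpow_add hn0, ← sub_eq_add_neg]
    _ ≤ p.1 ^ (-a) * p.2 ^ (-b) * n ^ (-δ) := by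
        have hs : (2 / n) ^ (-a) ≤ p.1 ^ (-a) := rpow_le_rpow_of_nonpos hs0 hs₂ (by linarith)
        have ht : 1 ≤ p.2 ^ (-b) :=
          one_le_rpow_of_pos_of_le_one_of_nonpos (by linarith) ht₂ (by linarith)
        gcongr

theorem connectionKernel_le (hn : 0 ≤ n) {p : ℝ × ℝ} (h₁ : 0 ≤ p.1) (h₂ : 0 ≤ p.2) :
    connectionKernel a b δ n p ≤
      n ^ (-δ) * (p.1 ^ (-a) * p.2 ^ (-b) + p.1 ^ (-b) * p.2 ^ (-a)) := by
  refine (min_le_right _ _).trans ?_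
  rcases le_total p.1 p.2 with h | h
  · rw [min_eq_left h, max_eq_right h]
    nlinarith [(by positivity : 0 ≤ n ^ (-δ) * (p.1 ^ (-b) * p.2 ^ (-a)))]
  · rw [min_eq_right h, max_eq_left h]
    nlinarith [(by positivity : 0 ≤ n ^ (-δ) * (p.1 ^ (-a) * p.2 ^ (-b)))]

end ConnectionKernel

section KernelIntegral

variable {a b δ n : ℝ}

theorem le_setIntegral_connectionKernel (ha : 0 ≤ a) (hb : 0 ≤ b) (haδ : a ≤ δ) (hn : 4 ≤ n) :
    2 ^ (-a) / 2 * n ^ (-(δ + 1 - a)) ≤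
      ∫ p in Icc (1 / n) 1 ×ˢ Icc (1 / n) 1, connectionKernel a b δ n p := by
  have hn0 : 0 < n := by linarith
  have h2n : 2 / n ≤ 1 / 2 := by rw [div_le_div_iff₀ hn0 two_pos]; linarith
  have h12 : 1 / n ≤ 2 / n := by gcongr; norm_num
  have hsub : Icc (1 / n) (2 / n) ×ˢ Icc (1 / 2) 1 ⊆ Icc (1 / n) 1 ×ˢ Icc (1 / n) 1 :=
    prod_mono (Icc_subset_Icc_right (by linarith)) (Icc_subset_Icc_left (h12.trans h2n))
  have hint := integrableOn_connectionKernel (a := a) (b := b) (δ := δ) (y := 1) hn0.le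
    (one_div_pos.2 hn0).le
  have hvol : volume.real (Icc (1 / n) (2 / n) ×ˢ Icc (1 / 2 : ℝ) 1) = 1 / n * (1 / 2) := by
    rw [Measure.volume_eq_prod, measureReal_prod_prod, volume_real_Icc_of_le h12,
      volume_real_Icc_of_le (by norm_num)]
    ring
  calc 2 ^ (-a) / 2 * n ^ (-(δ + 1 - a))
      = 2 ^ (-a) * n ^ (a - δ) * volume.real (Icc (1 / n) (2 / n) ×ˢ Icc (1 / 2 : ℝ) 1) := by
        rw [hvol, show -(δ + 1 - a) = a - δ + -1 by ring, rpow_add hn0, rpow_neg_one]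
        ring
    _ ≤ ∫ p in Icc (1 / n) (2 / n) ×ˢ Icc (1 / 2) 1, connectionKernel a b δ n p :=
        setIntegral_ge_of_const_le_real (measurableSet_Icc.prod measurableSet_Icc)
          (isCompact_Icc.prod isCompact_Icc).measure_lt_top.ne
          (fun p hp => le_connectionKernel ha hb haδ hn hp) (hint.mono_set hsub)
    _ ≤ ∫ p in Icc (1 / n) 1 ×ˢ Icc (1 / n) 1, connectionKernel a b δ n p := by
        refine setIntegral_mono_set hint ?_ hsub.eventuallyLE
        refine (ae_restrict_iff' (measurableSet_Icc.prod measurableSet_Icc)).2 (ae_of_all _ ?_)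
        rintro p ⟨h₁, h₂⟩
        exact connectionKernel_nonneg hn0.le ((one_div_pos.2 hn0).le.trans h₁.1)
          ((one_div_pos.2 hn0).le.trans h₂.1)

theorem setIntegral_connectionKernel_le (ha : 1 < a) (hb : b < 1) (hn : 1 ≤ n) :
    ∫ p in Icc (1 / n) 1 ×ˢ Icc (1 / n) 1, connectionKernel a b δ n p ≤
      2 / ((a - 1) * (1 - b)) * n ^ (-(δ + 1 - a)) := by
  have hn0 : 0 < n := by linarith
  have hx : 0 < 1 / n := one_div_pos.2 hn0
  have hx1 : 1 / n ≤ 1 := (div_le_one hn0).2 hn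
  set A := ∫ t in Icc (1 / n) 1, t ^ (-a)
  set B := ∫ t in Icc (1 / n) 1, t ^ (-b)
  have hA : A ≤ n ^ (a - 1) / (a - 1) := by
    rw [show n ^ (a - 1) = (1 / n) ^ (1 - a) by
      rw [one_div, inv_rpow hn0.le, ← rpow_neg hn0.le, neg_sub]]
    exact integral_Icc_rpow_neg_le_of_one_lt hx hx1 ha
  have hB : B ≤ 1 / (1 - b) := integral_Icc_rpow_neg_le_of_lt_one hx hx1 hb
  have hA0 : 0 ≤ A := setIntegral_nonneg measurableSet_Icc fun t ht =>
    rpow_nonneg (hx.le.trans ht.1) _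
  have hB0 : 0 ≤ B := setIntegral_nonneg measurableSet_Icc fun t ht =>
    rpow_nonneg (hx.le.trans ht.1) _
  have hab := integrableOn_rpow_mul_rpow_Icc_prod (y := 1) hx (-a) (-b)
  have hba := integrableOn_rpow_mul_rpow_Icc_prod (y := 1) hx (-b) (-a)
  have ha1 : 0 < a - 1 := sub_pos.2 ha
  have hb1 : 0 < 1 - b := sub_pos.2 hb
  calc ∫ p in Icc (1 / n) 1 ×ˢ Icc (1 / n) 1, connectionKernel a b δ n p
      ≤ ∫ p in Icc (1 / n) 1 ×ˢ Icc (1 / n) 1,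
          n ^ (-δ) * (p.1 ^ (-a) * p.2 ^ (-b) + p.1 ^ (-b) * p.2 ^ (-a)) :=
        setIntegral_mono_on (integrableOn_connectionKernel hn0.le hx.le) ((hab.add hba).const_mul _)
          (measurableSet_Icc.prod measurableSet_Icc) fun p ⟨h₁, h₂⟩ =>
            connectionKernel_le hn0.le (hx.le.trans h₁.1) (hx.le.trans h₂.1)
    _ = 2 * n ^ (-δ) * (A * B) := by
        have hAB : ∫ p in Icc (1 / n) 1 ×ˢ Icc (1 / n) 1, p.1 ^ (-a) * p.2 ^ (-b) = A * B :=
          setIntegral_prod_mul (fun t : ℝ => t ^ (-a)) (fun t : ℝ => t ^ (-b)) _ _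
        have hBA : ∫ p in Icc (1 / n) 1 ×ˢ Icc (1 / n) 1, p.1 ^ (-b) * p.2 ^ (-a) = B * A :=
          setIntegral_prod_mul (fun t : ℝ => t ^ (-b)) (fun t : ℝ => t ^ (-a)) _ _
        rw [integral_const_mul, integral_add hab hba, hAB, hBA]
        ring
    _ ≤ 2 * n ^ (-δ) * (n ^ (a - 1) / (a - 1) * (1 / (1 - b))) := by gcongr
    _ = 2 / ((a - 1) * (1 - b)) * n ^ (-(δ + 1 - a)) := by
        rw [show -(δ + 1 - a) = -δ + (a - 1) by ring, rpow_add hn0]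
        field_simp

end KernelIntegral

/-- Effective decay exponent of the weight-dependent random connection model with
interpolation kernel and long-range profile: in the regime `γ > 1/δ > γ'`,
`γ + γ' < 1`, one has `δ_eff = δ + 1 - γδ`, i.e. `-log I(n) / log n → δ + 1 - γδ`
for `I(n) = ∫∫_{[1/n,1]²} min(1, (s∧t)^(-γδ)(s∨t)^(-γ'δ) n^(-δ)) ds dt`. -/
theorem deff_kernel_large_gamma (δ γ γ' : ℝ) (hδ : 0 < δ)
    (hγ : 1 / δ < γ) (hγ'0 : 0 ≤ γ') (hγ' : γ' < 1 / δ)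
    (hsum : γ + γ' < 1) :
    Tendsto (fun n : ℝ =>
      -Real.log (∫ s in Set.Icc (1 / n) 1, ∫ t in Set.Icc (1 / n) 1,
          min 1 ((min s t) ^ (-(γ * δ)) * (max s t) ^ (-(γ' * δ)) * n ^ (-δ)))
        / Real.log n) atTop (nhds (δ + 1 - γ * δ)) := by
  have ha : 1 < γ * δ := by rwa [div_lt_iff₀ hδ] at hγ
  have hb : γ' * δ < 1 := by rwa [lt_div_iff₀ hδ] at hγ'
  have haδ : γ * δ ≤ δ := by nlinarith
  have hbounds : ∀ᶠ n in atTop,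
      2 ^ (-(γ * δ)) / 2 * n ^ (-(δ + 1 - γ * δ)) ≤
        ∫ p in Icc (1 / n) 1 ×ˢ Icc (1 / n) 1, connectionKernel (γ * δ) (γ' * δ) δ n p ∧
      ∫ p in Icc (1 / n) 1 ×ˢ Icc (1 / n) 1, connectionKernel (γ * δ) (γ' * δ) δ n p ≤
        2 / ((γ * δ - 1) * (1 - γ' * δ)) * n ^ (-(δ + 1 - γ * δ)) := by
    filter_upwards [eventually_ge_atTop 4] with n hn
    exact ⟨le_setIntegral_connectionKernel (by linarith) (mul_nonneg hγ'0 hδ.le) haδ hn,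
      setIntegral_connectionKernel_le ha hb (by linarith)⟩
  refine (tendsto_neg_log_div_log_of_rpow_bounds (by positivity) hbounds).congr' ?_
  filter_upwards [eventually_gt_atTop 0] with n hn
  rw [setIntegral_connectionKernel_eq_iterated hn.le (one_div_pos.2 hn).le]
  rfl
end

section
/- Let δ > 2, 0 ≤ γ < 1 − 1/δ, 0 ≤ γ' < 1 − γ, and for n > 1 set I(n) = ∫_{1/n}^1 ∫_{1/n}^1 min(1, (min(s,t))^{−γδ} (max(s,t))^{−γ'δ} n^{−δ}) ds dt. Then liminf_{n→∞} (−log I(n) / log n) > 2. -/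
/-!
On `[1/n, 1]²` the integrand is at least `n^{-δ}`, and, moving part of the exponent of `s ∨ t`
onto `s ∧ t`, at most `n^{-δ} (s^{-p} t^{-q} + s^{-q} t^{-p})` whenever `q ≤ γ'δ` and
`γδ + γ'δ ≤ p + q`. For `q < 1 < p` the integral of this product bound is `O(n^{p-1-δ})`, since
only the `s^{-p}` factor feels the cutoff `1/n`. The hypotheses are exactly what is needed to
choose such `p, q` with moreover `p < δ - 1`, so `-log I(n) / log n ≥ δ + 1 - p - o(1) > 2`;
the lower bound keeps `I(n)` positive and the quotient bounded.
-/

open Filter MeasureTheory Set Real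

lemma rpow_neg_mul_rpow_neg_le {a b p q s t : ℝ} (hqb : q ≤ b) (hpq : a + b ≤ p + q)
    (hs : 0 < s) (hst : s ≤ t) (ht1 : t ≤ 1) :
    s ^ (-a) * t ^ (-b) ≤ s ^ (-p) * t ^ (-q) := by
  have ht : 0 < t := hs.trans_le hst
  calc s ^ (-a) * t ^ (-b) = s ^ (-a) * t ^ (-(b - q)) * t ^ (-q) := by
        rw [mul_assoc, ← rpow_add ht]; ring_nf
    _ ≤ s ^ (-a) * s ^ (-(b - q)) * t ^ (-q) := by
        have := rpow_le_rpow_of_nonpos hs hst (show -(b - q) ≤ 0 by linarith)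
        gcongr
    _ = s ^ (-(a + b - q)) * t ^ (-q) := by rw [← rpow_add hs]; ring_nf
    _ ≤ s ^ (-p) * t ^ (-q) := by
        have := rpow_le_rpow_of_exponent_ge hs (hst.trans ht1)
          (show -p ≤ -(a + b - q) by linarith)
        gcongr

lemma min_rpow_neg_mul_max_rpow_neg_le {a b p q s t : ℝ} (hqb : q ≤ b) (hpq : a + b ≤ p + q)
    (hs : 0 < s) (hs1 : s ≤ 1) (ht : 0 < t) (ht1 : t ≤ 1) :
    min s t ^ (-a) * max s t ^ (-b) ≤ s ^ (-p) * t ^ (-q) + s ^ (-q) * t ^ (-p) := by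
  rcases le_total s t with hst | hts
  · rw [min_eq_left hst, max_eq_right hst]
    exact le_add_of_le_of_nonneg (rpow_neg_mul_rpow_neg_le hqb hpq hs hst ht1) (by positivity)
  · rw [min_eq_right hts, max_eq_left hts, mul_comm (s ^ (-q))]
    exact le_add_of_nonneg_of_le (by positivity) (rpow_neg_mul_rpow_neg_le hqb hpq ht hts hs1)

lemma integral_Icc_rpow_neg_s11 {ε r : ℝ} (hε : 0 < ε) (hε1 : ε ≤ 1) (hr : r ≠ 1) :
    ∫ t in Icc ε 1, t ^ (-r) = (1 - ε ^ (1 - r)) / (1 - r) := by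
  rw [integral_Icc_eq_integral_Ioc, ← intervalIntegral.integral_of_le hε1,
    integral_rpow (Or.inr ⟨by contrapose! hr; linarith, notMem_uIcc_of_lt hε one_pos⟩),
    one_rpow]
  ring_nf

lemma integral_Icc_rpow_neg_le_of_lt_one_s11 {ε q : ℝ} (hε : 0 < ε) (hε1 : ε ≤ 1) (hq : q < 1) :
    ∫ t in Icc ε 1, t ^ (-q) ≤ 1 / (1 - q) := by
  rw [integral_Icc_rpow_neg_s11 hε hε1 hq.ne]
  have : 0 < 1 - q := by linarith
  gcongr
  linarith [rpow_nonneg hε.le (1 - q)]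

lemma integral_Icc_rpow_neg_le_of_one_lt_s11 {ε p : ℝ} (hε : 0 < ε) (hε1 : ε ≤ 1) (hp : 1 < p) :
    ∫ t in Icc ε 1, t ^ (-p) ≤ ε ^ (1 - p) / (p - 1) := by
  rw [integral_Icc_rpow_neg_s11 hε hε1 hp.ne', ← neg_div_neg_eq, neg_sub, neg_sub]
  have : 0 < p - 1 := by linarith
  gcongr
  linarith

lemma integrableOn_Icc_rpow {c d r : ℝ} (hc : 0 < c) :
    IntegrableOn (fun t : ℝ => t ^ r) (Icc c d) :=
  (continuousOn_id.rpow_const fun _ ht => Or.inl (hc.trans_le ht.1).ne').integrableOn_Icc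

/-- The paper's `φ(s, t, n) = ρ(g(s, t) n)` is `connectionProb (γ * δ) (γ' * δ) (n ^ (-δ)) s t`. -/
noncomputable def connectionProb (a b w s t : ℝ) : ℝ := min 1 (min s t ^ (-a) * max s t ^ (-b) * w)

section

variable {a b w ε : ℝ}

lemma connectionProb_nonneg {s t : ℝ} (hs : 0 < s) (ht : 0 < t) (hw : 0 ≤ w) :
    0 ≤ connectionProb a b w s t :=
  le_min zero_le_one (by positivity [lt_min hs ht, hs.trans_le (le_max_left s t)])

lemma integrableOn_connectionProb (hε : 0 < ε) (hw : 0 ≤ w) :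
    IntegrableOn (fun z : ℝ × ℝ => connectionProb a b w z.1 z.2) (Icc ε 1 ×ˢ Icc ε 1)
      (volume.prod volume) := by
  refine Measure.integrableOn_of_bounded (M := 1) ?_ (by unfold connectionProb; fun_prop) ?_
  · exact (isCompact_Icc.prod isCompact_Icc).measure_lt_top.ne
  · filter_upwards [ae_restrict_mem (measurableSet_Icc.prod measurableSet_Icc)] with z hz
    rw [norm_of_nonneg (connectionProb_nonneg (hε.trans_le hz.1.1) (hε.trans_le hz.2.1) hw)]
    exact min_le_left _ _

lemma le_connectionProb {s t : ℝ} (ha : 0 ≤ a) (hb : 0 ≤ b) (hw0 : 0 ≤ w) (hw1 : w ≤ 1)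
    (hs : 0 < s) (hs1 : s ≤ 1) (ht : 0 < t) (ht1 : t ≤ 1) :
    w ≤ connectionProb a b w s t := by
  have hmin : 1 ≤ min s t ^ (-a) :=
    one_le_rpow_of_pos_of_le_one_of_nonpos (lt_min hs ht) (min_le_of_left_le hs1) (by linarith)
  have hmax : 1 ≤ max s t ^ (-b) :=
    one_le_rpow_of_pos_of_le_one_of_nonpos (hs.trans_le (le_max_left s t)) (max_le hs1 ht1)
      (by linarith)
  exact le_min hw1 (le_mul_of_one_le_left hw0 (one_le_mul_of_one_le_of_one_le hmin hmax))

lemma connectionProb_le {p q s t : ℝ} (hw : 0 ≤ w) (hqb : q ≤ b) (hpq : a + b ≤ p + q)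
    (hs : 0 < s) (hs1 : s ≤ 1) (ht : 0 < t) (ht1 : t ≤ 1) :
    connectionProb a b w s t ≤ w * (s ^ (-p) * t ^ (-q) + s ^ (-q) * t ^ (-p)) := by
  rw [mul_comm w]
  exact (min_le_right _ _).trans (mul_le_mul_of_nonneg_right
    (min_rpow_neg_mul_max_rpow_neg_le hqb hpq hs hs1 ht ht1) hw)

lemma mul_sq_le_integral_connectionProb (hε : 0 < ε) (hε1 : ε ≤ 1) (ha : 0 ≤ a) (hb : 0 ≤ b)
    (hw0 : 0 ≤ w) (hw1 : w ≤ 1) :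
    w * (1 - ε) ^ 2 ≤ ∫ s in Icc ε 1, ∫ t in Icc ε 1, connectionProb a b w s t := by
  have hS : MeasurableSet (Icc ε 1 ×ˢ Icc ε 1) := measurableSet_Icc.prod measurableSet_Icc
  calc w * (1 - ε) ^ 2 = ∫ _ in Icc ε 1 ×ˢ Icc ε 1, w ∂volume.prod volume := by
        rw [setIntegral_const, Measure.real, Measure.prod_prod, volume_Icc,
          ← ENNReal.ofReal_mul (by linarith), ENNReal.toReal_ofReal (by nlinarith), smul_eq_mul]
        ring
    _ ≤ ∫ z in Icc ε 1 ×ˢ Icc ε 1, connectionProb a b w z.1 z.2 ∂volume.prod volume :=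
        setIntegral_mono_on
          (integrableOn_const (isCompact_Icc.prod isCompact_Icc).measure_lt_top.ne)
          (integrableOn_connectionProb hε hw0) hS fun z ⟨hs, ht⟩ =>
          le_connectionProb ha hb hw0 hw1 (hε.trans_le hs.1) hs.2 (hε.trans_le ht.1) ht.2
    _ = _ := setIntegral_prod _ (integrableOn_connectionProb hε hw0)

lemma integral_connectionProb_le {p q : ℝ} (hε : 0 < ε) (hε1 : ε ≤ 1) (hw : 0 ≤ w)
    (hqb : q ≤ b) (hpq : a + b ≤ p + q) (hq : q < 1) (hp : 1 < p) :
    ∫ s in Icc ε 1, ∫ t in Icc ε 1, connectionProb a b w s t ≤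
      2 / ((p - 1) * (1 - q)) * ε ^ (1 - p) * w := by
  have hS : MeasurableSet (Icc ε 1 ×ˢ Icc ε 1) := measurableSet_Icc.prod measurableSet_Icc
  have hprod : ∀ r r' : ℝ, IntegrableOn (fun z : ℝ × ℝ => z.1 ^ (-r) * z.2 ^ (-r'))
      (Icc ε 1 ×ˢ Icc ε 1) (volume.prod volume) := fun r r' => by
    rw [IntegrableOn, ← Measure.prod_restrict]
    exact (integrableOn_Icc_rpow hε).mul_prod (integrableOn_Icc_rpow hε)
  have hAp := integral_Icc_rpow_neg_le_of_one_lt_s11 hε hε1 hp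
  have hAq := integral_Icc_rpow_neg_le_of_lt_one_s11 hε hε1 hq
  have hA0 : ∀ r : ℝ, 0 ≤ ∫ t in Icc ε 1, t ^ (-r) := fun r =>
    setIntegral_nonneg measurableSet_Icc fun t ht => rpow_nonneg (hε.le.trans ht.1) _
  calc ∫ s in Icc ε 1, ∫ t in Icc ε 1, connectionProb a b w s t
      = ∫ z in Icc ε 1 ×ˢ Icc ε 1, connectionProb a b w z.1 z.2 ∂volume.prod volume :=
        (setIntegral_prod _ (integrableOn_connectionProb hε hw)).symm
    _ ≤ ∫ z in Icc ε 1 ×ˢ Icc ε 1,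
          w * (z.1 ^ (-p) * z.2 ^ (-q) + z.1 ^ (-q) * z.2 ^ (-p)) ∂volume.prod volume :=
        setIntegral_mono_on (integrableOn_connectionProb hε hw)
          (((hprod p q).add (hprod q p)).const_mul w) hS fun z ⟨hs, ht⟩ =>
          connectionProb_le hw hqb hpq (hε.trans_le hs.1) hs.2 (hε.trans_le ht.1) ht.2
    _ = w * (2 * ((∫ t in Icc ε 1, t ^ (-p)) * ∫ t in Icc ε 1, t ^ (-q))) := by
        rw [integral_const_mul, integral_add (hprod p q) (hprod q p),
          setIntegral_prod_mul (· ^ (-p)) (· ^ (-q)), setIntegral_prod_mul (· ^ (-q)) (· ^ (-p))]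
        ring
    _ ≤ w * (2 * (ε ^ (1 - p) / (p - 1) * (1 / (1 - q)))) := by
        have := hA0 p
        have := hA0 q
        gcongr
    _ = 2 / ((p - 1) * (1 - q)) * ε ^ (1 - p) * w := by field_simp

lemma quarter_mul_rpow_le_integral_connectionProb {δ n : ℝ} (ha : 0 ≤ a) (hb : 0 ≤ b)
    (hδ : 0 ≤ δ) (hn : 2 ≤ n) :
    1 / 4 * n ^ (-δ) ≤
      ∫ s in Icc (1 / n) 1, ∫ t in Icc (1 / n) 1, connectionProb a b (n ^ (-δ)) s t := by
  have hn0 : 0 < n := by linarith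
  have hsq : 1 / 4 ≤ (1 - 1 / n) ^ 2 := by
    have : 1 / n ≤ 1 / 2 := one_div_le_one_div_of_le two_pos hn
    nlinarith
  calc 1 / 4 * n ^ (-δ) ≤ n ^ (-δ) * (1 - 1 / n) ^ 2 := by rw [mul_comm]; gcongr
    _ ≤ _ := mul_sq_le_integral_connectionProb (by positivity)
          ((div_le_one hn0).2 (by linarith)) ha hb (by positivity)
          (rpow_le_one_of_one_le_of_nonpos (by linarith) (by linarith))

lemma integral_connectionProb_le_mul_rpow {δ n p q : ℝ} (hqb : q ≤ b) (hpq : a + b ≤ p + q)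
    (hq : q < 1) (hp : 1 < p) (hn : 1 < n) :
    ∫ s in Icc (1 / n) 1, ∫ t in Icc (1 / n) 1, connectionProb a b (n ^ (-δ)) s t ≤
      2 / ((p - 1) * (1 - q)) * n ^ (-(δ + 1 - p)) := by
  have hn0 : 0 < n := by linarith
  calc _ ≤ 2 / ((p - 1) * (1 - q)) * (1 / n) ^ (1 - p) * n ^ (-δ) :=
        integral_connectionProb_le (by positivity) ((div_le_one hn0).2 hn.le) (by positivity)
          hqb hpq hq hp
    _ = 2 / ((p - 1) * (1 - q)) * n ^ (-(δ + 1 - p)) := by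
        rw [mul_assoc, one_div, inv_rpow hn0.le, ← rpow_neg hn0.le, ← rpow_add hn0]
        ring_nf

end

lemma tendsto_sub_log_div_log (κ C : ℝ) :
    Tendsto (fun n : ℝ => κ - log C / log n) atTop (nhds κ) := by
  simpa using tendsto_const_nhds.sub (tendsto_const_nhds.div_atTop tendsto_log_atTop)

lemma neg_log_mul_rpow_div_log {n κ C : ℝ} (hC : 0 < C) (hn : 1 < n) :
    -log (C * n ^ (-κ)) / log n = κ - log C / log n := by
  have hn0 : 0 < n := by linarith
  rw [log_mul hC.ne' (rpow_pos_of_pos hn0 _).ne', log_rpow hn0]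
  field_simp [(log_pos hn).ne']
  ring

lemma neg_log_div_log_le_of_le {x y n : ℝ} (hx : 0 < x) (hxy : x ≤ y) (hn : 1 < n) :
    -log y / log n ≤ -log x / log n :=
  div_le_div_of_nonneg_right (neg_le_neg (log_le_log hx hxy)) (log_pos hn).le

lemma le_liminf_neg_log_div_log {f : ℝ → ℝ} {κ σ C c : ℝ} (hC : 0 < C) (hc : 0 < c)
    (hlow : ∀ᶠ n in atTop, c * n ^ (-σ) ≤ f n) (hup : ∀ᶠ n in atTop, f n ≤ C * n ^ (-κ)) :
    κ ≤ liminf (fun n => -log (f n) / log n) atTop := by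
  have hlow' : ∀ᶠ n in atTop, -log (f n) / log n ≤ σ - log c / log n := by
    filter_upwards [hlow, eventually_gt_atTop 1] with n hn hn1
    rw [← neg_log_mul_rpow_div_log hc hn1]
    exact neg_log_div_log_le_of_le (mul_pos hc (rpow_pos_of_pos (by linarith) _)) hn hn1
  have hup' : ∀ᶠ n in atTop, κ - log C / log n ≤ -log (f n) / log n := by
    filter_upwards [hlow, hup, eventually_gt_atTop 1] with n hn hn' hn1
    rw [← neg_log_mul_rpow_div_log hC hn1]
    exact neg_log_div_log_le_of_le
      ((mul_pos hc (rpow_pos_of_pos (by linarith) _)).trans_le hn) hn' hn1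
  have hcobdd : IsCoboundedUnder (· ≥ ·) atTop (fun n => -log (f n) / log n) :=
    ((tendsto_sub_log_div_log σ c).isBoundedUnder_le.mono_le hlow').isCoboundedUnder_ge
  rw [← (tendsto_sub_log_div_log κ C).liminf_eq]
  exact liminf_le_liminf hup' (tendsto_sub_log_div_log κ C).isBoundedUnder_ge hcobdd

lemma exists_exponents {a b δ : ℝ} (hδ : 2 < δ) (ha : a < δ - 1) (hab : a + b < δ) :
    ∃ p q : ℝ, q ≤ b ∧ q < 1 ∧ 1 < p ∧ a + b ≤ p + q ∧ p < δ - 1 := by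
  obtain ⟨η, hη, hη'⟩ := exists_between (lt_min (sub_pos.2 hab) (sub_pos.2 hδ))
  obtain ⟨hη₁, hη₂⟩ := lt_min_iff.1 hη'
  refine ⟨max (a + b - min b (1 - η)) (1 + η), min b (1 - η), min_le_left _ _,
    (min_le_right _ _).trans_lt (by linarith),
    (lt_add_of_pos_right 1 hη).trans_le (le_max_right _ _),
    by linarith [le_max_left (a + b - min b (1 - η)) (1 + η)], max_lt ?_ (by linarith)⟩
  rcases min_choice b (1 - η) with h | h <;> rw [h] <;> linarith

/-- The `δ_eff > 2` region of the phase diagram (Figure 1): for `δ > 2`,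
`0 ≤ γ < 1 - 1/δ` and `0 ≤ γ' < 1 - γ`, the effective decay exponent of the
weight-dependent random connection model with interpolation kernel exceeds `2`:
`liminf_{n→∞} -log I(n)/log n > 2` for
`I(n) = ∫∫_{[1/n,1]²} min(1, (s∧t)^(-γδ)(s∨t)^(-γ'δ) n^(-δ)) ds dt`. -/
theorem deff_gt_two_region (δ γ γ' : ℝ) (hδ : 2 < δ)
    (hγ0 : 0 ≤ γ) (hγ : γ < 1 - 1 / δ) (hγ'0 : 0 ≤ γ') (hγ' : γ' < 1 - γ) :
    2 < liminf (fun n : ℝ =>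
      -Real.log (∫ s in Set.Icc (1 / n) 1, ∫ t in Set.Icc (1 / n) 1,
          min 1 ((min s t) ^ (-(γ * δ)) * (max s t) ^ (-(γ' * δ)) * n ^ (-δ)))
        / Real.log n) atTop := by
  have hδ0 : 0 < δ := by linarith
  have ha : γ * δ < δ - 1 := by
    have := mul_lt_mul_of_pos_right hγ hδ0
    rwa [sub_mul, one_div_mul_cancel hδ0.ne', one_mul] at this
  obtain ⟨p, q, hqb, hq1, hp1, hpq, hpδ⟩ :=
    exists_exponents (a := γ * δ) (b := γ' * δ) hδ ha (by nlinarith)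
  have hκ : 2 < δ + 1 - p := by linarith
  exact hκ.trans_le (le_liminf_neg_log_div_log (div_pos two_pos (mul_pos (sub_pos.2 hp1) (sub_pos.2 hq1)))
    (by norm_num : (0 : ℝ) < 1 / 4)
    ((eventually_ge_atTop 2).mono fun n hn =>
      quarter_mul_rpow_le_integral_connectionProb (by positivity) (by positivity) hδ0.le hn)
    ((eventually_gt_atTop 1).mono fun n hn =>
      integral_connectionProb_le_mul_rpow hqb hpq hq1 hp1 hn))
end
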